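/- Let A be a symmetric positive definite m-banded matrix with spectrum contained in [a, b], 0 < a ≤ b. Set r = b/a, q = (√r − 1)/(√r + 1), λ = q^{2/m}, C₀ = (1 + √r)²/(2ar), and C = max{a⁻¹, C₀}. Then the entries of the inverse satisfy |(A⁻¹)_{ij}| ≤ C·λ^{|i−j|} for all i, j. -/

import Mathlib

/-!
If `p` has degree `k`, then `p(A)` vanishes more than `k m / 2` places off the diagonal, so there
`(A⁻¹)ᵢⱼ = (A⁻¹ - p(A))ᵢⱼ`, whose size is at most `max |1/x - p(x)|` over the spectrum.
The affine map of `[a, b]` onto `[-1, 1]` turns `1/x` into a multiple of the Poisson kernel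
`(1 - q²)/(1 - 2 q t + q²) = 1 + 2 ∑ q^l T_l(t)`; truncating this Chebyshev series at degree `k`
(with a corrected last coefficient) approximates it to within `2 q^(k+1)/(1 - q²)`, as one sees by
summing the geometric series in `z = q e^{iθ}`, `t = cos θ`. Taking `k ≈ 2 |i - j| / m` gives the
decay.
-/

open Polynomial Chebyshev

namespace Matrix

section Spectral

variable {𝕜 ι : Type*} [RCLike 𝕜] [Fintype ι] [DecidableEq ι]

lemma sum_norm_sq_eq_one_of_mem_unitaryGroup {U : Matrix ι ι 𝕜} (hU : U ∈ unitaryGroup ι 𝕜)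
    (i : ι) : ∑ l, ‖U i l‖ ^ 2 = 1 := by
  have h := congrFun₂ (mem_unitaryGroup_iff.mp hU) i i
  rw [star_eq_conjTranspose, one_apply_eq] at h
  simp only [mul_apply, conjTranspose_apply, ← starRingEnd_apply, RCLike.mul_conj] at h
  exact_mod_cast h

lemma IsHermitian.norm_cfc_apply_le {A : Matrix ι ι 𝕜} (hA : A.IsHermitian) {f : ℝ → ℝ} {K : ℝ}
    (hf : ∀ l, |f (hA.eigenvalues l)| ≤ K) (i j : ι) : ‖cfc f A i j‖ ≤ K := by
  set U : Matrix ι ι 𝕜 := ↑hA.eigenvectorUnitary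
  have hU : U ∈ unitaryGroup ι 𝕜 := hA.eigenvectorUnitary.2
  rw [hA.cfc_eq, IsHermitian.cfc, Unitary.conjStarAlgAut_apply, mul_apply]
  calc ‖∑ l, _‖ ≤ ∑ l, K * ((‖U i l‖ ^ 2 + ‖U j l‖ ^ 2) / 2) := by
        refine (norm_sum_le _ _).trans (Finset.sum_le_sum fun l _ => ?_)
        rw [mul_diagonal, star_apply, norm_mul, norm_mul, norm_star, Function.comp_apply,
          Function.comp_apply, RCLike.norm_ofReal, mul_right_comm, mul_comm]
        exact mul_le_mul (hf l) (by linarith [two_mul_le_add_sq ‖U i l‖ ‖U j l‖]) (by positivity)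
          ((abs_nonneg _).trans (hf l))
    _ = K := by
        rw [← Finset.mul_sum, ← Finset.sum_div, Finset.sum_add_distrib,
          sum_norm_sq_eq_one_of_mem_unitaryGroup hU, sum_norm_sq_eq_one_of_mem_unitaryGroup hU]
        ring

lemma IsHermitian.norm_inv_apply_le {A : Matrix ι ι 𝕜} (hA : A.IsHermitian) (hA₀ : IsUnit A)
    {p : ℝ[X]} {i j : ι} (hp : aeval A p i j = 0) {K : ℝ}
    (hK : ∀ l, |(hA.eigenvalues l)⁻¹ - p.eval (hA.eigenvalues l)| ≤ K) : ‖A⁻¹ i j‖ ≤ K := by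
  have hcont : ContinuousOn (fun x : ℝ => x⁻¹) (spectrum ℝ A) :=
    A.finite_real_spectrum.continuousOn _
  have hdiff : A⁻¹ - aeval A p = cfc (fun x : ℝ => x⁻¹ - p.eval x) A := by
    rw [cfc_sub _ _ A hcont, cfc_polynomial p A, nonsing_inv_eq_ringInverse,
      cfc_ringInverse_id A hA₀]
  rw [← sub_zero (A⁻¹ i j), ← hp, ← sub_apply, hdiff]
  exact hA.norm_cfc_apply_le hK i j

end Spectral

section Banded

variable {n : ℕ} {R : Type*}

/-- The paper's `m`-banded matrices are those with `IsBanded A (m / 2)`. -/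
def IsBanded [Zero R] (A : Matrix (Fin n) (Fin n) R) (w : ℝ) : Prop :=
  ∀ i j : Fin n, w < |(i : ℤ) - (j : ℤ)| → A i j = 0

lemma isBanded_one [Semiring R] : (1 : Matrix (Fin n) (Fin n) R).IsBanded 0 := by
  intro i j hij
  refine one_apply_ne fun h => ?_
  simp [h] at hij

lemma IsBanded.mul [Semiring R] {A B : Matrix (Fin n) (Fin n) R} {v w : ℝ} (hA : A.IsBanded v)
    (hB : B.IsBanded w) : (A * B).IsBanded (v + w) := by
  intro i j hij
  rw [mul_apply]
  refine Finset.sum_eq_zero fun l _ => ?_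
  have htri : |(i : ℤ) - j| ≤ |(i : ℤ) - l| + |(l : ℤ) - j| := abs_sub_le _ _ _
  rcases lt_or_ge v (|(i : ℤ) - l| : ℤ) with hil | hil
  · rw [hA i l hil, zero_mul]
  · have hlj : w < (|(l : ℤ) - j| : ℤ) := by
      have : ((|(i : ℤ) - j| : ℤ) : ℝ) ≤ (|(i : ℤ) - l| : ℤ) + (|(l : ℤ) - j| : ℤ) := by
        exact_mod_cast htri
      linarith
    rw [hB l j hlj, mul_zero]

lemma IsBanded.pow [Semiring R] {A : Matrix (Fin n) (Fin n) R} {w : ℝ} (hA : A.IsBanded w) :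
    ∀ k : ℕ, (A ^ k).IsBanded (k * w)
  | 0 => by simpa using isBanded_one
  | k + 1 => by simpa [pow_succ, add_mul] using (hA.pow k).mul hA

lemma IsBanded.aeval [CommSemiring R] {A : Matrix (Fin n) (Fin n) R} {w : ℝ} (hA : A.IsBanded w)
    (hw : 0 ≤ w) {p : R[X]} {k : ℕ} (hp : p.natDegree ≤ k) : (aeval A p).IsBanded (k * w) := by
  intro i j hij
  rw [aeval_eq_sum_range, sum_apply]
  refine Finset.sum_eq_zero fun l hl => ?_
  have hlk : (l : ℝ) ≤ k := by
    exact_mod_cast (Finset.mem_range_succ_iff.mp hl).trans hp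
  rw [smul_apply, hA.pow l i j ((mul_le_mul_of_nonneg_right hlk hw).trans_lt hij), smul_zero]

end Banded

end Matrix

namespace Complex

lemma re_one_add_div_one_sub (z : ℂ) :
    ((1 + z) / (1 - z)).re = (1 - ‖z‖ ^ 2) / ‖1 - z‖ ^ 2 := by
  rw [div_re, ← normSq_eq_norm_sq, ← normSq_eq_norm_sq, ← add_div]
  congr 1
  simp only [add_re, one_re, sub_re, add_im, one_im, sub_im, normSq_apply]
  ring

lemma norm_one_add_div_one_sub_sub_geom_sum (z : ℂ) (hz : ‖z‖ < 1) (k : ℕ) :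
    ‖(1 + z) / (1 - z) - (1 + 2 * ∑ l ∈ Finset.range k, z ^ (l + 1)
        + ((2 * ‖z‖ ^ 2 / (1 - ‖z‖ ^ 2) : ℝ) : ℂ) * z ^ k)‖
      = 2 * ‖z‖ ^ (k + 1) / (1 - ‖z‖ ^ 2) := by
  have hz1 : 1 - z ≠ 0 := sub_ne_zero.mpr fun h => by simp [← h] at hz
  have hq : (0 : ℝ) < 1 - ‖z‖ ^ 2 := by nlinarith [norm_nonneg z]
  have hgeom : ∑ l ∈ Finset.range k, z ^ (l + 1) = z * (1 - z ^ k) / (1 - z) := by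
    rw [eq_div_iff hz1, ← mul_neg_geom_sum, Finset.sum_mul, Finset.mul_sum, Finset.mul_sum]
    exact Finset.sum_congr rfl fun l _ => by ring
  -- the error is a multiple of `z - ‖z‖² = z (1 - z̄)`, whose modulus `‖z‖ ‖1 - z‖` cancels `1 - z`
  have hconj : z - ‖z‖ ^ 2 = z * (1 - starRingEnd ℂ z) := by
    rw [mul_sub, mul_one, mul_conj, normSq_eq_norm_sq]
    push_cast; ring
  have hid : (1 + z) / (1 - z) - (1 + 2 * ∑ l ∈ Finset.range k, z ^ (l + 1)
        + ((2 * ‖z‖ ^ 2 / (1 - ‖z‖ ^ 2) : ℝ) : ℂ) * z ^ k)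
      = 2 * z ^ k * (z * (1 - starRingEnd ℂ z)) / ((1 - z) * ((1 - ‖z‖ ^ 2 : ℝ) : ℂ)) := by
    rw [hgeom, ← hconj]
    have : ((1 - ‖z‖ ^ 2 : ℝ) : ℂ) ≠ 0 := ofReal_ne_zero.mpr hq.ne'
    push_cast at this ⊢
    field_simp
    ring
  have hnc : ‖1 - starRingEnd ℂ z‖ = ‖1 - z‖ := by
    rw [← norm_conj, map_sub, map_one, conj_conj]
  rw [hid, norm_div, norm_mul, norm_mul, norm_mul, norm_mul, norm_pow, hnc, norm_real,
    Real.norm_of_nonneg hq.le, Complex.norm_two]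
  field_simp [norm_ne_zero_iff.mpr hz1]
  ring

end Complex

/-- The Chebyshev series `1 + 2 ∑_{l ≥ 1} q^l T_l` of the Poisson kernel
`(1 - q²)/(1 - 2 q t + q²)`, truncated at degree `k`, with the last coefficient corrected so that
the error has constant modulus on the circle `t = cos θ`. -/
noncomputable def chebyshevApprox (q : ℝ) (k : ℕ) : ℝ[X] :=
  1 + 2 * ∑ l ∈ Finset.range k, C (q ^ (l + 1)) * T ℝ (l + 1)
    + C (2 * q ^ 2 / (1 - q ^ 2) * q ^ k) * T ℝ k

lemma natDegree_chebyshevApprox_le (q : ℝ) (k : ℕ) : (chebyshevApprox q k).natDegree ≤ k := by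
  have hCT : ∀ (c : ℝ) (l : ℤ), l.natAbs ≤ k → (C c * T ℝ l).natDegree ≤ k := fun c l hl =>
    (natDegree_C_mul_le c _).trans (by rwa [natDegree_T])
  refine natDegree_add_le_of_degree_le (natDegree_add_le_of_degree_le (by simp) ?_)
    (hCT _ _ (by simp))
  refine natDegree_mul_le.trans ?_
  rw [natDegree_ofNat, zero_add]
  exact natDegree_sum_le_of_forall_le _ _ fun l hl => hCT _ _ (by simp at hl; omega)

open Complex in
lemma abs_sub_eval_chebyshevApprox_le {q t : ℝ} (hq₀ : 0 ≤ q) (hq₁ : q < 1)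
    (ht : t ∈ Set.Icc (-1) 1) (k : ℕ) :
    |(1 - q ^ 2) / (1 - 2 * q * t + q ^ 2) - (chebyshevApprox q k).eval t|
      ≤ 2 * q ^ (k + 1) / (1 - q ^ 2) := by
  obtain ⟨φ, rfl⟩ : ∃ φ, Real.cos φ = t := ⟨Real.arccos t, Real.cos_arccos ht.1 ht.2⟩
  set z : ℂ := q * exp (φ * I)
  have hz : ‖z‖ = q := by
    rw [norm_mul, norm_real, norm_exp_ofReal_mul_I, mul_one, Real.norm_of_nonneg hq₀]
  have hre : ∀ l : ℕ, (z ^ l).re = q ^ l * Real.cos (l * φ) := by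
    intro l
    rw [mul_pow, ← ofReal_pow, ← exp_nat_mul, ← mul_assoc, re_ofReal_mul]
    exact_mod_cast congrArg (q ^ l * ·) (exp_ofReal_mul_I_re (l * φ))
  have hpoisson : (1 - q ^ 2) / (1 - 2 * q * Real.cos φ + q ^ 2) = ((1 + z) / (1 - z)).re := by
    have him : z.im = q * Real.sin φ := by
      rw [im_ofReal_mul, exp_ofReal_mul_I_im]
    have hsq : ‖1 - z‖ ^ 2 = 1 - 2 * q * Real.cos φ + q ^ 2 := by
      rw [← normSq_eq_norm_sq, normSq_apply, sub_re, sub_im, one_re, one_im, him,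
        show z.re = q * Real.cos φ by simpa using hre 1]
      linear_combination q ^ 2 * Real.sin_sq_add_cos_sq φ
    rw [re_one_add_div_one_sub, hz, hsq]
  have heval : (chebyshevApprox q k).eval (Real.cos φ)
      = (1 + 2 * ∑ l ∈ Finset.range k, z ^ (l + 1)
          + ((2 * ‖z‖ ^ 2 / (1 - ‖z‖ ^ 2) : ℝ) : ℂ) * z ^ k).re := by
    simp only [chebyshevApprox, eval_add, eval_mul, eval_one, eval_C, eval_ofNat, eval_finsetSum,
      T_real_cos, add_re, one_re, mul_re, re_ofNat, im_ofNat, ofReal_re, ofReal_im, zero_mul,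
      sub_zero, re_sum, hre, hz]
    push_cast
    ring
  rw [hpoisson, heval, ← sub_re]
  refine (abs_re_le_norm _).trans_eq ?_
  rw [Complex.norm_one_add_div_one_sub_sub_geom_sum z (hz ▸ hq₁), hz]

/-- On `[a, a s²]`, `1/x` is `(a s)⁻¹` times the Poisson kernel with `q = (s - 1)/(s + 1)` at
`t = (a (1 + s²) - 2 x)/(a (s² - 1))`. For `s = 1` this affine map is junk, but then `q = 0` and
only the constant term `a⁻¹` survives. -/
noncomputable def invApprox (a s : ℝ) (k : ℕ) : ℝ[X] :=
  C (a * s)⁻¹ * (chebyshevApprox ((s - 1) / (s + 1)) k).comp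
    (C ((1 + s ^ 2) / (s ^ 2 - 1)) - C (2 / (a * (s ^ 2 - 1))) * X)

lemma natDegree_invApprox_le (a s : ℝ) (k : ℕ) : (invApprox a s k).natDegree ≤ k := by
  refine (natDegree_C_mul_le _ _).trans (natDegree_comp_le.trans ?_)
  have hlin : (C ((1 + s ^ 2) / (s ^ 2 - 1)) - C (2 / (a * (s ^ 2 - 1))) * X).natDegree ≤ 1 := by
    compute_degree
  simpa using Nat.mul_le_mul (natDegree_chebyshevApprox_le _ k) hlin

lemma abs_inv_sub_eval_invApprox_le {a s x : ℝ} (ha : 0 < a) (hs : 1 ≤ s)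
    (hx : x ∈ Set.Icc a (a * s ^ 2)) (k : ℕ) :
    |x⁻¹ - (invApprox a s k).eval x|
      ≤ (1 + s) ^ 2 / (2 * a * s ^ 2) * ((s - 1) / (s + 1)) ^ (k + 1) := by
  set q := (s - 1) / (s + 1) with hq
  set t := (1 + s ^ 2) / (s ^ 2 - 1) - 2 / (a * (s ^ 2 - 1)) * x with htdef
  have hs₀ : 0 < s := by linarith
  have hq₀ : 0 ≤ q := div_nonneg (by linarith) (by linarith)
  have hq₁ : q < 1 := (div_lt_one (by linarith)).mpr (by linarith)
  have ht : t ∈ Set.Icc (-1) 1 ∧ a * (s ^ 2 - 1) * t = a * (1 + s ^ 2) - 2 * x := by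
    rcases hs.eq_or_lt with rfl | hs₁
    · obtain rfl : x = a := by simpa using hx
      norm_num [htdef]
      ring
    · have hs₂ : 0 < s ^ 2 - 1 := by nlinarith
      have key : a * (s ^ 2 - 1) * t = a * (1 + s ^ 2) - 2 * x := by
        rw [htdef]
        field_simp
      have hpos := mul_pos ha hs₂
      refine ⟨⟨le_of_mul_le_mul_left ?_ hpos, le_of_mul_le_mul_left ?_ hpos⟩, key⟩ <;>
        linarith [hx.1, hx.2]
  have h1q : 1 - q ^ 2 = 4 * s / (s + 1) ^ 2 := by
    rw [hq]
    field_simp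
    ring
  have hinv : x⁻¹ = (a * s)⁻¹ * ((1 - q ^ 2) / (1 - 2 * q * t + q ^ 2)) := by
    have hden : 1 - 2 * q * t + q ^ 2 = 4 * x / (a * (s + 1) ^ 2) := by
      rw [hq]
      field_simp
      linear_combination (-2) * ht.2
    have hx₀ : 0 < x := ha.trans_le hx.1
    rw [h1q, hden]
    field_simp
  have heval : (invApprox a s k).eval x = (a * s)⁻¹ * (chebyshevApprox q k).eval t := by
    simp only [invApprox, eval_mul, eval_C, eval_comp, eval_sub, eval_X]
    rfl
  rw [hinv, heval, ← mul_sub, abs_mul, abs_of_pos (by positivity)]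
  calc (a * s)⁻¹ * |_| ≤ (a * s)⁻¹ * (2 * q ^ (k + 1) / (1 - q ^ 2)) :=
        mul_le_mul_of_nonneg_left (abs_sub_eval_chebyshevApprox_le hq₀ hq₁ ht.1 k) (by positivity)
    _ = _ := by
        rw [h1q]
        field_simp
        ring

lemma pow_div_add_one_le_rpow_pow {q : ℝ} (hq₀ : 0 ≤ q) (hq₁ : q ≤ 1) (m d : ℕ) :
    q ^ ((2 * d - 1) / m + 1) ≤ (q ^ ((2 : ℝ) / m)) ^ d := by
  rcases m.eq_zero_or_pos with rfl | hm
  · simpa using hq₁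
  rw [← Real.rpow_natCast, ← Real.rpow_natCast, ← Real.rpow_mul hq₀]
  refine Real.rpow_le_rpow_of_exponent_ge' hq₀ hq₁ (by positivity) ?_
  rw [div_mul_eq_mul_div, div_le_iff₀ (by positivity)]
  have h := Nat.lt_div_mul_add (a := 2 * d - 1) hm
  have h' : 2 * d ≤ ((2 * d - 1) / m + 1) * m := by rw [add_one_mul]; omega
  exact_mod_cast h'

theorem banded_inverse_decay_general {n : ℕ} (m : ℕ)
    (A : Matrix (Fin n) (Fin n) ℝ) (hA : A.IsHermitian) (hPD : A.PosDef)
    (a b : ℝ) (ha : 0 < a) (hab : a ≤ b)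
    (heig : ∀ i, a ≤ hA.eigenvalues i ∧ hA.eigenvalues i ≤ b)
    (hband : ∀ i j : Fin n, (m : ℝ) / 2 < |(i : ℤ) - (j : ℤ)| → A i j = 0) :
    ∀ i j : Fin n,
      |A⁻¹ i j| ≤
        (max a⁻¹ ((1 + Real.sqrt (b / a)) ^ 2 / (2 * a * (b / a)))) *
          (((Real.sqrt (b / a) - 1) / (Real.sqrt (b / a) + 1)) ^ ((2 : ℝ) / m)) ^
            ((i : ℤ) - (j : ℤ)).natAbs := by
  intro i j
  set s := √(b / a)
  have hba : 1 ≤ b / a := (one_le_div ha).mpr hab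
  have hs : 1 ≤ s := Real.one_le_sqrt.mpr hba
  have hbs : b / a = s ^ 2 := (Real.sq_sqrt (zero_le_one.trans hba)).symm
  have heig' : ∀ l, hA.eigenvalues l ∈ Set.Icc a (a * s ^ 2) := fun l => by
    rw [← hbs, mul_div_cancel₀ _ ha.ne']
    exact heig l
  have hq₀ : 0 ≤ (s - 1) / (s + 1) := div_nonneg (by linarith) (by linarith)
  have hq₁ : (s - 1) / (s + 1) ≤ 1 := (div_le_one (by linarith)).mpr (by linarith)
  rw [hbs]
  set d := ((i : ℤ) - (j : ℤ)).natAbs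
  rcases d.eq_zero_or_pos with hd | hd
  · have hdiag : ‖A⁻¹ i j‖ ≤ a⁻¹ :=
      hA.norm_inv_apply_le hPD.isUnit (p := 0) (by simp) fun l => by
        rw [eval_zero, sub_zero, abs_inv, abs_of_pos (ha.trans_le (heig l).1)]
        exact inv_anti₀ ha (heig l).1
    rw [hd, pow_zero, mul_one, ← Real.norm_eq_abs]
    exact hdiag.trans (le_max_left _ _)
  set k := (2 * d - 1) / m
  have hk : (k : ℝ) * (m / 2) < d := by
    have h : ((k * m : ℕ) : ℝ) < 2 * d := by
      exact_mod_cast (Nat.div_mul_le_self _ _).trans_lt (by omega)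
    push_cast at h
    linarith
  have hzero : aeval A (invApprox a s k) i j = 0 :=
    (Matrix.IsBanded.aeval hband (by positivity) (natDegree_invApprox_le a s k)) i j
      (hk.trans_eq (by simp [d]))
  calc |A⁻¹ i j|
      ≤ (1 + s) ^ 2 / (2 * a * s ^ 2) * ((s - 1) / (s + 1)) ^ (k + 1) :=
        (Real.norm_eq_abs _).symm.trans_le <| hA.norm_inv_apply_le hPD.isUnit hzero fun l =>
          abs_inv_sub_eval_invApprox_le ha hs (heig' l) k
    _ ≤ _ := mul_le_mul (le_max_right _ _) (pow_div_add_one_le_rpow_pow hq₀ hq₁ m d)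
          (pow_nonneg hq₀ _) (le_max_of_le_left (by positivity))

/-- **Demko–Moss–Smith.** Let `A` be a symmetric positive definite `m`-banded matrix
with spectrum in `[a, b]`, `0 < a ≤ b`. With `r = b/a`, `q = (√r - 1)/(√r + 1)`,
`λ = q^(2/m)`, `C₀ = (1 + √r)²/(2 a r)` and `C = max a⁻¹ C₀`, the entries of the
inverse decay exponentially: `|(A⁻¹) i j| ≤ C λ^|i - j|`. -/
theorem banded_inverse_decay {n : ℕ} (m : ℕ) (hm : 0 < m)
    (A : Matrix (Fin n) (Fin n) ℝ) (hA : A.IsHermitian) (hPD : A.PosDef)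
    (a b : ℝ) (ha : 0 < a) (hab : a ≤ b)
    (heig : ∀ i, a ≤ hA.eigenvalues i ∧ hA.eigenvalues i ≤ b)
    (hband : ∀ i j : Fin n, (m : ℝ) / 2 < |(i : ℤ) - (j : ℤ)| → A i j = 0) :
    ∀ i j : Fin n,
      |A⁻¹ i j| ≤
        (max a⁻¹ ((1 + Real.sqrt (b / a)) ^ 2 / (2 * a * (b / a)))) *
          (((Real.sqrt (b / a) - 1) / (Real.sqrt (b / a) + 1)) ^ ((2 : ℝ) / m)) ^
            ((i : ℤ) - (j : ℤ)).natAbs :=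
  banded_inverse_decay_general m A hA hPD a b ha hab heig hband
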